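/- For 1 ≤ i ≤ 2n, one has v_i = ρ_i ρ_{2n}^{-1} in the affine Weyl group of type C_n^{(1)}, where ρ_i = s_{i-1}⋯s_1 s_0 for 1 ≤ i ≤ n, ρ_i = s_{2n-i+1}⋯s_{n-1}s_n s_{n-1}⋯s_1 s_0 for n+1 ≤ i ≤ 2n, and v_i is defined by v_i = s_i⋯s_{n-1}s_n s_{n-1}⋯s_2 s_1 for 1 ≤ i ≤ n, v_i = s_{2n-i}⋯s_2 s_1 for n+1 ≤ i ≤ 2n-1, v_{2n} = 1. -/

import Mathlib

/-- The Coxeter matrix of type `C_n^{(1)}` on `Fin (n+1)` (vertex `i` is `s_i`). -/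
def cMatAf (n : ℕ) : CoxeterMatrix (Fin (n + 1)) where
  M i j :=
    if i = j then 1
    else if (i : ℕ) + 1 = j ∨ (j : ℕ) + 1 = i then
      (if (i : ℕ) + (j : ℕ) = 1 ∨ (i : ℕ) + (j : ℕ) = 2 * n - 1 then 4 else 3)
    else 2
  isSymm := by
    ext i j
    simp only [Matrix.transpose_apply, Matrix.transpose, Matrix.of_apply]
    rcases eq_or_ne i j with h | h
    · simp [h]
    · simp only [if_neg h, if_neg (Ne.symm h)]
      by_cases h1 : (i : ℕ) + 1 = j ∨ (j : ℕ) + 1 = i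
      · simp [h1, h1.symm, Nat.add_comm]
      · have h2 : ¬((j : ℕ) + 1 = i ∨ (i : ℕ) + 1 = j) := fun hh => h1 hh.symm
        simp [h1, h2]
  diagonal i := by simp
  off_diagonal i j h := by
    simp only [if_neg h]
    split_ifs <;> omega

/-- The affine Coxeter system of type `C_n^{(1)}`. -/
noncomputable def csAf (n : ℕ) : CoxeterSystem (cMatAf n) (cMatAf n).Group :=
  (cMatAf n).toCoxeterSystem

/-- Index conversion for the affine system (labels `0,…,n`). -/
def idxA (n : ℕ) (i : ℕ) : Fin (n + 1) := ⟨i % (n + 1), Nat.mod_lt _ (Nat.succ_pos n)⟩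

/-- Reduced word of `v_i`. -/
def vword (n i : ℕ) : List ℕ :=
  if i ≤ n then List.range' i (n - i + 1) ++ (List.range' 1 (n - 1)).reverse
  else (List.range' 1 (2 * n - i)).reverse

/-- Word of `u_k = s_{n+1-k} ⋯ s_{n-1} s_n`. -/
def uwordC (n k : ℕ) : List ℕ := List.range' (n + 1 - k) k

/-- Word of `ρ_i`. -/
def rhoWord (n i : ℕ) : List ℕ :=
  if i ≤ n then (List.range i).reverse
  else List.range' (2 * n - i + 1) (i - n) ++ (List.range n).reverse

/-- The set `𝒫^n_C`: partitions with parts in `(0, 2n]`, parts `< n` strictly decreasing. -/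
def PCset (n : ℕ) : Set (List ℕ) :=
  {L | L.Chain' (fun a b => b ≤ a ∧ (a < n → b < a)) ∧ ∀ x ∈ L, 0 < x ∧ x ≤ 2 * n}

/-- The set `𝒮𝒫(n)` of strict partitions with parts at most `n`. -/
def SPset (n : ℕ) : Set (List ℕ) :=
  {L | L.Chain' (fun a b => b < a) ∧ ∀ x ∈ L, 0 < x ∧ x ≤ n}

/-- `λ ↦ λ^* = (n+1-λ_l, …, n+1-λ_1)`. -/
def starSP (n : ℕ) (L : List ℕ) : List ℕ := (L.map (fun k => n + 1 - k)).reverse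


/-!
The word of `ρ_{2n}` is, letter for letter, the reversed word of `v_i` followed by the word of
`ρ_i`. Reversing a word inverts its product because the generators are involutions, so
`ρ_{2n} = v_i⁻¹ ρ_i`; no braid relation is needed.
-/

theorem List.range'_append_range'_of_add_eq {s m t k l : ℕ} (ht : s + m = t) (hl : m + k = l) :
    range' s m ++ range' t k = range' s l := by
  subst ht hl
  exact range'_append_1

open List

theorem rhoWord_two_mul (n : ℕ) : rhoWord n (2 * n) = range' 1 n ++ (range n).reverse := by
  rcases Nat.eq_zero_or_pos n with rfl | hn
  · rfl
  · simp [rhoWord, show ¬ 2 * n ≤ n by omega, show 2 * n - n = n by omega]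

theorem vword_reverse_append_rhoWord {n i : ℕ} (hn : 0 < n) (hi : i ≤ 2 * n) :
    (vword n i).reverse ++ rhoWord n i = rhoWord n (2 * n) := by
  rw [rhoWord_two_mul]
  rcases le_or_gt i n with hle | hlt
  · obtain ⟨m, rfl⟩ : ∃ m, n = m + 1 := ⟨n - 1, by omega⟩
    rw [vword, rhoWord, if_pos hle, if_pos hle, reverse_append, reverse_reverse, append_assoc,
      ← reverse_append, range_eq_range', range_eq_range',
      range'_append_range'_of_add_eq (zero_add i) (show i + (m + 1 - i + 1) = m + 1 + 1 by omega),
      Nat.add_sub_cancel, range'_1_concat, range'_1_concat (s := 1)]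
    simp [Nat.add_comm]
  · rw [vword, rhoWord, if_neg hlt.not_ge, if_neg hlt.not_ge, reverse_reverse, ← append_assoc,
      range'_append_range'_of_add_eq (add_comm _ _) (show 2 * n - i + (i - n) = n by omega)]

theorem stmt2_general (n i : ℕ) (h1 : 1 ≤ i) (h2 : i ≤ 2 * n) :
    (csAf n).wordProd ((vword n i).map (idxA n))
      = (csAf n).wordProd ((rhoWord n i).map (idxA n)) *
        ((csAf n).wordProd ((rhoWord n (2 * n)).map (idxA n)))⁻¹ := by
  rw [← vword_reverse_append_rhoWord (by omega) h2, map_append, map_reverse,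
    CoxeterSystem.wordProd_append, CoxeterSystem.wordProd_reverse, mul_inv_rev, inv_inv,
    mul_inv_cancel_left]

/-- `v_i = ρ_i ρ_{2n}⁻¹` in the affine Weyl group of type `C_n^{(1)}`. -/
theorem stmt2 (n i : ℕ) (hn : 2 ≤ n) (h1 : 1 ≤ i) (h2 : i ≤ 2 * n) :
    (csAf n).wordProd ((vword n i).map (idxA n))
      = (csAf n).wordProd ((rhoWord n i).map (idxA n)) *
        ((csAf n).wordProd ((rhoWord n (2 * n)).map (idxA n)))⁻¹ :=
  stmt2_general n i h1 h2
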